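/- For the Stokeslet G_{ij}(x,y) = (1/4π)[−log|x−y| δ_{ij} + (xᵢ−yᵢ)(xⱼ−yⱼ)/|x−y|²], the single layer Stokes potential with density μ on a smooth closed curve γ satisfies |S_γμ(x) + (1/4π)[log|x| I − R/|x|²] ∫_γ μ ds| → 0 as |x| → ∞, where R is the matrix with entries xᵢxⱼ. -/

import Mathlib

open MeasureTheory Real Filter

noncomputable section

abbrev E2 := EuclideanSpace ℝ (Fin 2)

/-- The 2D Stokeslet
`G_{ij}(x,y) = (1/4π)[-log|x-y| δ_{ij} + (xᵢ-yᵢ)(xⱼ-yⱼ)/|x-y|²]`. -/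
def stokeslet (x y : E2) (i j : Fin 2) : ℝ :=
  (1/(4*π)) * (-(Real.log ‖x - y‖) * (if i = j then 1 else 0)
    + (x i - y i) * (x j - y j) / ‖x - y‖ ^ 2)

/-! For `2‖y‖ ≤ ‖x‖` the Stokeslet `G(x, y)` differs from `G(x, 0)`, which is exactly the
far-field kernel `-(1/4π)[log|x| I - R/|x|²]`, by `O(‖y‖/‖x‖)`: both `log ‖x - y‖` and the
degree-zero homogeneous `uᵢuⱼ/‖u‖²` at `u = x - y` move by `O(‖y‖/‖x‖)`. So the corrected
potential is `∑ⱼ ∫ (G(x, γ t) - G(x, 0))ᵢⱼ μⱼ(t) ‖γ'(t)‖ dt`, whose integrand is uniformly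
`O(1/‖x‖)` on the compact parameter interval. -/

open Set
open scoped Interval

lemma abs_log_norm_sub_sub_log_norm_le {E : Type*} [NormedAddCommGroup E] {x y : E}
    (hx : x ≠ 0) (hy : 2 * ‖y‖ ≤ ‖x‖) :
    |log ‖x - y‖ - log ‖x‖| ≤ 2 * ‖y‖ / ‖x‖ := by
  have hs : 0 < ‖x‖ := norm_pos_iff.mpr hx
  have hr : ‖x‖ / 2 ≤ ‖x - y‖ := by linarith [norm_sub_norm_le x y]
  have hrs : |‖x - y‖ - ‖x‖| ≤ ‖y‖ := by simpa using abs_norm_sub_norm_le (x - y) x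
  have hr0 : 0 < ‖x - y‖ := by linarith
  rw [← log_div hr0.ne' hs.ne', abs_le]
  constructor
  · have hlow := one_sub_inv_le_log_of_pos (div_pos hr0 hs)
    have : 1 - (‖x - y‖ / ‖x‖)⁻¹ = (‖x - y‖ - ‖x‖) / ‖x - y‖ := by field_simp
    rw [this] at hlow
    have : -(2 * ‖y‖ / ‖x‖) ≤ (‖x - y‖ - ‖x‖) / ‖x - y‖ := by
      rw [neg_le, ← neg_div, neg_sub]
      calc (‖x‖ - ‖x - y‖) / ‖x - y‖ ≤ ‖y‖ / (‖x‖ / 2) :=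
            div_le_div₀ (norm_nonneg _) (by linarith [abs_le.mp hrs]) (by positivity) hr
        _ = 2 * ‖y‖ / ‖x‖ := by field_simp
    linarith
  · calc log (‖x - y‖ / ‖x‖) ≤ ‖x - y‖ / ‖x‖ - 1 := log_le_sub_one_of_pos (div_pos hr0 hs)
      _ = (‖x - y‖ - ‖x‖) / ‖x‖ := by field_simp
      _ ≤ 2 * ‖y‖ / ‖x‖ := by gcongr; linarith [abs_le.mp hrs, norm_nonneg y]

lemma abs_apply_mul_apply_sub_le {ι : Type*} [Fintype ι] (u v : EuclideanSpace ℝ ι) (i j : ι) :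
    |u i * u j - v i * v j| ≤ (‖u‖ + ‖v‖) * ‖u - v‖ := by
  have hsplit : u i * u j - v i * v j = u i * (u - v) j + (u - v) i * v j := by
    simp only [PiLp.sub_apply]; ring
  calc |u i * u j - v i * v j| ≤ |u i| * |(u - v) j| + |(u - v) i| * |v j| := by
        simpa only [hsplit, abs_mul] using abs_add_le (u i * (u - v) j) ((u - v) i * v j)
    _ ≤ ‖u‖ * ‖u - v‖ + ‖u - v‖ * ‖v‖ := by
        gcongr <;> [exact PiLp.norm_apply_le u i; exact PiLp.norm_apply_le (u - v) j;
          exact PiLp.norm_apply_le (u - v) i; exact PiLp.norm_apply_le v j]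
    _ = (‖u‖ + ‖v‖) * ‖u - v‖ := by ring

lemma abs_mul_div_norm_sq_sub_le {ι : Type*} [Fintype ι] {x y : EuclideanSpace ℝ ι}
    (hx : x ≠ 0) (hy : 2 * ‖y‖ ≤ ‖x‖) (i j : ι) :
    |(x - y) i * (x - y) j / ‖x - y‖ ^ 2 - x i * x j / ‖x‖ ^ 2| ≤ 12 * ‖y‖ / ‖x‖ := by
  set u := x - y
  set r := ‖u‖
  set s := ‖x‖
  have hs : 0 < s := norm_pos_iff.mpr hx
  have hr : s / 2 ≤ r := by linarith [norm_sub_norm_le x y]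
  have hr0 : 0 < r := by linarith
  have hrs : |s - r| ≤ ‖y‖ := by simpa [u] using abs_norm_sub_norm_le x u
  have hnum : |u i * u j - x i * x j| ≤ (r + s) * ‖y‖ := by
    simpa [u] using abs_apply_mul_apply_sub_le u x i j
  have hfac : |x i * x j * (s ^ 2 - r ^ 2)| ≤ s ^ 2 * ((r + s) * ‖y‖) := by
    rw [abs_mul, abs_mul, show s ^ 2 - r ^ 2 = (s - r) * (r + s) by ring, abs_mul,
      abs_of_pos (by positivity : 0 < r + s)]
    have hxx : |x i| * |x j| ≤ s ^ 2 := by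
      rw [sq]
      exact mul_le_mul (PiLp.norm_apply_le x i) (PiLp.norm_apply_le x j) (abs_nonneg _) hs.le
    calc |x i| * |x j| * (|s - r| * (r + s)) ≤ s ^ 2 * (‖y‖ * (r + s)) := by gcongr
      _ = s ^ 2 * ((r + s) * ‖y‖) := by ring
  have hsplit : u i * u j / r ^ 2 - x i * x j / s ^ 2
      = (u i * u j - x i * x j) / r ^ 2 + x i * x j * (s ^ 2 - r ^ 2) / (s ^ 2 * r ^ 2) := by
    field_simp; ring
  have hinv : (r + s) / r ^ 2 ≤ 6 / s := by
    rw [div_le_div_iff₀ (by positivity) hs]; nlinarith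
  rw [hsplit]
  calc _ ≤ |(u i * u j - x i * x j) / r ^ 2| + |x i * x j * (s ^ 2 - r ^ 2) / (s ^ 2 * r ^ 2)| :=
        abs_add_le _ _
    _ ≤ (r + s) * ‖y‖ / r ^ 2 + s ^ 2 * ((r + s) * ‖y‖) / (s ^ 2 * r ^ 2) := by
        rw [abs_div, abs_div, abs_of_pos (by positivity : 0 < r ^ 2),
          abs_of_pos (by positivity : 0 < s ^ 2 * r ^ 2)]
        gcongr
    _ = 2 * ‖y‖ * ((r + s) / r ^ 2) := by field_simp; ring
    _ ≤ 2 * ‖y‖ * (6 / s) := by gcongr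
    _ = 12 * ‖y‖ / s := by ring

lemma abs_stokeslet_sub_stokeslet_zero_le {x y : E2} (hx : x ≠ 0) (hy : 2 * ‖y‖ ≤ ‖x‖)
    (i j : Fin 2) : |stokeslet x y i j - stokeslet x 0 i j| ≤ 2 * ‖y‖ / ‖x‖ := by
  have hlog := abs_log_norm_sub_sub_log_norm_le hx hy
  have hrat := abs_mul_div_norm_sq_sub_le hx hy i j
  have hδ : |(if i = j then (1 : ℝ) else 0)| ≤ 1 := by split_ifs <;> simp
  have hsplit : stokeslet x y i j - stokeslet x 0 i j = (1 / (4 * π)) *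
      (-(log ‖x - y‖ - log ‖x‖) * (if i = j then 1 else 0)
        + ((x - y) i * (x - y) j / ‖x - y‖ ^ 2 - x i * x j / ‖x‖ ^ 2)) := by
    simp only [stokeslet, sub_zero, PiLp.sub_apply, PiLp.zero_apply]; ring
  have hπ : 14 / (4 * π) ≤ 2 := by
    rw [div_le_iff₀ (by positivity)]; linarith [pi_gt_three]
  rw [hsplit, abs_mul, abs_of_pos (by positivity : 0 < 1 / (4 * π))]
  calc _ ≤ 1 / (4 * π) * (2 * ‖y‖ / ‖x‖ * 1 + 12 * ‖y‖ / ‖x‖) := by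
        gcongr
        refine (abs_add_le _ _).trans (add_le_add ?_ hrat)
        rw [abs_mul, abs_neg]
        exact mul_le_mul hlog hδ (abs_nonneg _) (by positivity)
    _ = 14 / (4 * π) * (‖y‖ / ‖x‖) := by ring
    _ ≤ 2 * (‖y‖ / ‖x‖) := by gcongr
    _ = 2 * ‖y‖ / ‖x‖ := by ring

lemma continuousAt_stokeslet {x y : E2} (hxy : x ≠ y) (i j : Fin 2) :
    ContinuousAt (fun z => stokeslet x z i j) y := by
  have : ‖x - y‖ ≠ 0 := norm_ne_zero_iff.mpr (sub_ne_zero.mpr hxy)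
  unfold stokeslet
  fun_prop (disch := simpa)

lemma sum_stokeslet_zero_mul (x Q : E2) (i : Fin 2) :
    ∑ j, stokeslet x 0 i j * Q j
      = -((1 / (4 * π)) * (log ‖x‖ * Q i - (∑ j, x i * x j * Q j) / ‖x‖ ^ 2)) := by
  fin_cases i <;> simp [stokeslet, Fin.sum_univ_two] <;> ring

lemma intervalIntegral_stokeslet_mul {w : ℝ → ℝ} {a b : ℝ} (hw : ContinuousOn w [[a, b]])
    {x : E2} {γ : ℝ → E2} (hγ : ContinuousOn γ [[a, b]]) (hx : ∀ t ∈ [[a, b]], γ t ≠ x)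
    (i j : Fin 2) :
    ∫ t in a..b, stokeslet x (γ t) i j * w t
      = (∫ t in a..b, (stokeslet x (γ t) i j - stokeslet x 0 i j) * w t)
        + stokeslet x 0 i j * ∫ t in a..b, w t := by
  have hG : ContinuousOn (fun t => stokeslet x (γ t) i j) [[a, b]] := fun t ht =>
    (continuousAt_stokeslet (hx t ht).symm i j).comp_continuousWithinAt (hγ t ht)
  have h₁ : IntervalIntegrable (fun t => (stokeslet x (γ t) i j - stokeslet x 0 i j) * w t)
      volume a b := ((hG.sub continuousOn_const).mul hw).intervalIntegrable
  have h₂ : IntervalIntegrable (fun t => stokeslet x 0 i j * w t) volume a b :=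
    (continuousOn_const.mul hw).intervalIntegrable
  rw [← intervalIntegral.integral_const_mul, ← intervalIntegral.integral_add h₁ h₂]
  congr 1 with t
  ring

lemma tendsto_intervalIntegral_zero_of_norm_le {α F : Type*} [NormedAddCommGroup F]
    [NormedSpace ℝ F] {l : Filter α} {f : α → ℝ → F} {g : α → ℝ} {a b : ℝ}
    (hfg : ∀ᶠ x in l, ∀ t ∈ Ι a b, ‖f x t‖ ≤ g x) (hg : Tendsto g l (nhds 0)) :
    Tendsto (fun x => ∫ t in a..b, f x t) l (nhds 0) := by
  refine squeeze_zero_norm' ?_ (by simpa using hg.mul_const |b - a|)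
  filter_upwards [hfg] with x hx
  exact intervalIntegral.norm_integral_le_of_norm_le_const hx

lemma tendsto_sum_intervalIntegral_stokeslet_sub_stokeslet_zero {a b : ℝ} {γ : ℝ → E2}
    (hγ : ContinuousOn γ [[a, b]]) {w : Fin 2 → ℝ → ℝ} (hw : ∀ j, ContinuousOn (w j) [[a, b]])
    (i : Fin 2) :
    Tendsto (fun x => ∑ j, ∫ t in a..b, (stokeslet x (γ t) i j - stokeslet x 0 i j) * w j t)
      (cocompact E2) (nhds 0) := by
  obtain ⟨M, hM⟩ := isCompact_uIcc.exists_bound_of_continuousOn hγ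
  suffices h : ∀ j, Tendsto (fun x : E2 =>
      ∫ t in a..b, (stokeslet x (γ t) i j - stokeslet x 0 i j) * w j t) (cocompact E2) (nhds 0) by
    simpa using tendsto_finsetSum Finset.univ fun j _ => h j
  intro j
  obtain ⟨B, hB⟩ := isCompact_uIcc.exists_bound_of_continuousOn (hw j)
  refine tendsto_intervalIntegral_zero_of_norm_le (g := fun x => 2 * M / ‖x‖ * B) ?_
    (by simpa using (tendsto_const_nhds.div_atTop tendsto_norm_cocompact_atTop).mul_const B)
  filter_upwards [tendsto_norm_cocompact_atTop.eventually_ge_atTop (2 * M),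
    tendsto_norm_cocompact_atTop.eventually_gt_atTop 0] with x hxM hx₀ t ht
  have ht' := uIoc_subset_uIcc ht
  have hγt := hM t ht'
  have hB₀ : 0 ≤ B := (norm_nonneg _).trans (hB t ht')
  calc ‖(stokeslet x (γ t) i j - stokeslet x 0 i j) * w j t‖
      ≤ 2 * ‖γ t‖ / ‖x‖ * B := by
        rw [norm_mul]
        exact mul_le_mul (abs_stokeslet_sub_stokeslet_zero_le (norm_pos_iff.mp hx₀)
          (by linarith) i j) (hB t ht') (norm_nonneg _) (by positivity)
    _ ≤ 2 * M / ‖x‖ * B := by gcongr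

/-- The curve is parametrized by `γ` on `[0, 2π]`, so `ds = ‖γ'(t)‖ dt` and `Q = ∫_γ μ ds`. -/
theorem stokes_single_layer_log_growth_general
    (γ : ℝ → E2) (hγ : ContDiff ℝ 1 γ)
    (μ : ℝ → E2) (hμ : Continuous μ)
    (Q : E2) (hQ : ∀ j, Q j = ∫ t in (0:ℝ)..(2*π), μ t j * ‖deriv γ t‖)
    (S : E2 → Fin 2 → ℝ)
    (hS : ∀ x i, S x i = ∑ j, ∫ t in (0:ℝ)..(2*π), stokeslet x (γ t) i j * μ t j * ‖deriv γ t‖) :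
    ∀ i : Fin 2,
      Tendsto (fun x : E2 => S x i
          + (1/(4*π)) * (Real.log ‖x‖ * Q i - (∑ j, x i * x j * Q j) / ‖x‖ ^ 2))
        (cocompact E2) (nhds 0) := by
  intro i
  set w : Fin 2 → ℝ → ℝ := fun j t => μ t j * ‖deriv γ t‖
  have hw : ∀ j, Continuous (w j) := fun j =>
    ((continuous_apply j).comp ((PiLp.continuous_ofLp ..).comp hμ)).mul
      (hγ.continuous_deriv le_rfl).norm
  have hSw : ∀ x, S x i = ∑ j, ∫ t in (0:ℝ)..(2*π), stokeslet x (γ t) i j * w j t := by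
    simp only [hS, w, mul_assoc, implies_true]
  have hQw : ∀ j, Q j = ∫ t in (0:ℝ)..(2*π), w j t := hQ
  obtain ⟨M, hM⟩ := (isCompact_uIcc (a := 0) (b := 2 * π)).exists_bound_of_continuousOn
    hγ.continuous.continuousOn
  refine (tendsto_sum_intervalIntegral_stokeslet_sub_stokeslet_zero (a := 0) (b := 2 * π)
    hγ.continuous.continuousOn (fun j => (hw j).continuousOn) i).congr' ?_
  filter_upwards [tendsto_norm_cocompact_atTop.eventually_gt_atTop M] with x hx
  have hoff : ∀ t ∈ [[0, 2 * π]], γ t ≠ x := by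
    rintro t ht rfl
    linarith [hM t ht]
  simp only [hSw, fun j => intervalIntegral_stokeslet_mul (hw j).continuousOn
    hγ.continuous.continuousOn hoff i j, Finset.sum_add_distrib, ← hQw, sum_stokeslet_zero_mul]
  ring

/-- The single layer Stokes potential with density `μ` on a smooth closed curve `γ`
satisfies `|S_γμ(x) + (1/4π)[log|x| I - R/|x|²] ∫_γ μ ds| → 0` as `|x| → ∞`,
where `R` is the matrix with entries `xᵢxⱼ`.  The curve is parametrized by the
`2π`-periodic `C¹` map `γ` with `ds = ‖γ'(t)‖dt`; `Q = ∫_γ μ ds ∈ ℝ²`, and the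
claim is stated componentwise. -/
theorem stokes_single_layer_log_growth
    (γ : ℝ → E2) (hγ : ContDiff ℝ 1 γ) (hper : ∀ t, γ (t + 2*π) = γ t)
    (μ : ℝ → E2) (hμ : Continuous μ) (hμper : ∀ t, μ (t + 2*π) = μ t)
    (Q : E2) (hQ : ∀ j, Q j = ∫ t in (0:ℝ)..(2*π), μ t j * ‖deriv γ t‖)
    (S : E2 → Fin 2 → ℝ)
    (hS : ∀ x i, S x i = ∑ j, ∫ t in (0:ℝ)..(2*π), stokeslet x (γ t) i j * μ t j * ‖deriv γ t‖) :
    ∀ i : Fin 2,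
      Tendsto (fun x : E2 => S x i
          + (1/(4*π)) * (Real.log ‖x‖ * Q i - (∑ j, x i * x j * Q j) / ‖x‖ ^ 2))
        (cocompact E2) (nhds 0) :=
  stokes_single_layer_log_growth_general γ hγ μ hμ Q hQ S hS
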